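/- Let n, d ≥ 1, let f, f̂ be integers with 0 ≤ f ≤ f̂ < n/2, let κ ≥ 0, and let A : (ℝ^d)ⁿ → ℝ^d be an (f,κ)-robust aggregator. Let x₁,…,x_n ∈ ℝ^d, for each k ∈ {1,…,n} let N_k be a set of (n−f̂) nearest neighbors of x_k among x₁,…,x_n, and set y_k = (1/(n−f̂))∑_{i∈N_k} x_i (the f̂-NNM transform). Then for every S ⊆ {1,…,n} with |S| = n − f, ‖A(y₁,…,y_n) − x̄_S‖² ≤ (12f̂(κ+1)/(n−f))·(1/|S|)∑_{i∈S}‖x_i − x̄_S‖²; that is, A∘(f̂-NNM) is (f,κ')-robust with κ' = 12f̂(κ+1)/(n−f). -/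

import Mathlib

/-!
Centre everything at the honest mean `x̄` and put `vᵢ = xᵢ - x̄`, `σ² = |S|⁻¹ ∑_{i∈S} ‖vᵢ‖²`.
For an honest `k`, `(n - f̂) (y_k - x̄) = ∑_{i∈N_k} vᵢ`. The honest part of this sum, over
`S ∩ N_k`, equals `-∑_{S \ N_k} vᵢ`, so Cauchy–Schwarz on both sides bounds it. Each of the at
most `f` Byzantine neighbours is no farther from `x_k` than any honest non-neighbour, so its
norm is at most `min_{S \ N_k} ‖v‖ + 2 ‖v_k‖`. A weighted Cauchy–Schwarz and a polynomial
inequality in the four counts give `‖∑_{N_k} v‖ ≤ (Λ - 2f) σ + 2f ‖v_k‖` with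
`|S| Λ² = 12 f̂ (n - f̂)²`, and the triangle inequality in `ℓ²(S)` gives
`∑_{k∈S} ‖y_k - x̄‖² ≤ 12 f̂ σ²`. Finally, robustness of `A` on the `y`'s, the split
`∑ ‖y_k - x̄‖² = ∑ ‖y_k - ȳ‖² + |S| ‖ȳ - x̄‖²` and `(s + t)² ≤ (κ + 1) (s²/κ + t²)` cost the
factor `(κ + 1) / |S|`.
-/

open Finset

/-- An aggregator `A : (ℝ^d)^n → ℝ^d` is `(f,κ)`-robust if for all inputs `x₁, …, x_n`
and every `S ⊆ {1,…,n}` with `|S| = n - f`, writing `x̄_S` for the average over `S`,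
`‖A x - x̄_S‖² ≤ (κ/|S|) ∑_{i∈S} ‖x_i - x̄_S‖²`. -/
def IsRobust (n d fq : ℕ) (κ : ℝ)
    (A : (Fin n → EuclideanSpace ℝ (Fin d)) → EuclideanSpace ℝ (Fin d)) : Prop :=
  ∀ (x : Fin n → EuclideanSpace ℝ (Fin d)) (S : Finset (Fin n)), S.card = n - fq →
    ‖A x - (S.card : ℝ)⁻¹ • ∑ i ∈ S, x i‖ ^ 2
      ≤ κ / (S.card : ℝ) * ∑ i ∈ S, ‖x i - (S.card : ℝ)⁻¹ • ∑ j ∈ S, x j‖ ^ 2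

/-- `N` is a set of `(n - f̂)` nearest neighbors of `x_k` among `x₁, …, x_n`. -/
def IsNN (n d fhat : ℕ) (z : Fin n → EuclideanSpace ℝ (Fin d)) (k : Fin n)
    (N : Finset (Fin n)) : Prop :=
  N.card = n - fhat ∧ ∀ i ∈ N, ∀ j ∉ N, ‖z i - z k‖ ≤ ‖z j - z k‖

-- `i`, `a`, `b` are the sizes of `S ∩ N`, `N \ S`, `S \ N` for the honest set `S` and the
-- neighbourhood `N` of an honest point.
lemma nnm_count_le {a b i f fhat : ℕ} (ha : a ≤ f) (hf : f ≤ fhat) (hp : fhat ≤ i + a)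
    (hb : b + f = a + fhat) :
    (i + b) * ((a + b + 2 * f) * (b * i + a * (i + b) + 2 * f * b))
      ≤ 12 * fhat * b * (i + a) ^ 2 := by
  obtain ⟨g, rfl⟩ := Nat.exists_eq_add_of_le ha
  obtain ⟨e, rfl⟩ := Nat.exists_eq_add_of_le hf
  obtain ⟨h, hi⟩ := Nat.exists_eq_add_of_le hp
  obtain rfl : i = g + e + h := by omega
  obtain rfl : b = a + e := by omega
  -- the difference of the two sides is a polynomial in `a, g, e, h` with nonnegative coefficients
  zify
  rw [← sub_nonneg]
  ring_nf
  positivity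

lemma four_mul_sq_mul_le {f fhat n : ℕ} (hf : f ≤ fhat) (hfn : 2 * fhat ≤ n) :
    4 * f ^ 2 * (n - f) ≤ 12 * fhat * (n - fhat) ^ 2 := by
  obtain ⟨e, rfl⟩ := Nat.exists_eq_add_of_le hf
  obtain ⟨h, rfl⟩ := Nat.exists_eq_add_of_le hfn
  rw [show 2 * (f + e) + h - f = f + 2 * e + h by omega,
    show 2 * (f + e) + h - (f + e) = f + e + h by omega]
  zify
  rw [← sub_nonneg]
  ring_nf
  positivity

-- The gap is `a (u - B t)² + F (u - B s)² + a F B (t - s)²`.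
lemma weighted_sq_add_le {B a F u t s : ℝ} (hB : 0 ≤ B) (ha : 0 ≤ a) (hF : 0 ≤ F) :
    B * (u + a * t + F * s) ^ 2 ≤ (B + a + F) * (u ^ 2 + a * B * t ^ 2 + F * B * s ^ 2) := by
  nlinarith [mul_nonneg ha (sq_nonneg (u - B * t)), mul_nonneg hF (sq_nonneg (u - B * s)),
    mul_nonneg (mul_nonneg (mul_nonneg ha hF) hB) (sq_nonneg (t - s))]

lemma add_add_le_mul_of_sq_le {a b i f fhat : ℕ} {W τ σ Λ : ℝ} (ha : a ≤ f) (hf : f ≤ fhat)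
    (hp : fhat ≤ i + a) (hb : b + f = a + fhat) (hb0 : 0 < b) (hσ0 : 0 ≤ σ) (hΛ0 : 0 ≤ Λ)
    (hW : W ^ 2 ≤ b * i * σ ^ 2) (hτ : b * τ ^ 2 ≤ (i + b) * σ ^ 2)
    (hΛ : 12 * fhat * (i + a) ^ 2 ≤ (i + b) * Λ ^ 2) :
    W + a * τ + 2 * f * σ ≤ Λ * σ := by
  have hcount : ((i + b) * ((a + b + 2 * f) * (b * i + a * (i + b) + 2 * f * b)) : ℝ)
      ≤ 12 * fhat * b * (i + a) ^ 2 := by exact_mod_cast nnm_count_le ha hf hp hb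
  have hb' : (0 : ℝ) < b := by exact_mod_cast hb0
  have hCS := weighted_sq_add_le (u := W) (t := τ) (s := σ) hb'.le (Nat.cast_nonneg a)
    (by positivity : (0 : ℝ) ≤ 2 * f)
  have hsum : W ^ 2 + a * b * τ ^ 2 + 2 * f * b * σ ^ 2
      ≤ (b * i + a * (i + b) + 2 * f * b) * σ ^ 2 := by
    nlinarith [mul_le_mul_of_nonneg_left hτ (Nat.cast_nonneg (α := ℝ) a)]
  have hsq : (i + b) * b * (W + a * τ + 2 * f * σ) ^ 2 ≤ (i + b) * b * (Λ * σ) ^ 2 := calc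
    (i + b) * b * (W + a * τ + 2 * f * σ) ^ 2
        ≤ (i + b) * ((a + b + 2 * f) * (b * i + a * (i + b) + 2 * f * b)) * σ ^ 2 := by
      nlinarith [mul_le_mul_of_nonneg_left hsum (by positivity : (0 : ℝ) ≤ b + a + 2 * f)]
    _ ≤ 12 * fhat * b * (i + a) ^ 2 * σ ^ 2 := by gcongr
    _ ≤ (i + b) * b * (Λ * σ) ^ 2 := by
      nlinarith [mul_le_mul_of_nonneg_left hΛ (by positivity : (0 : ℝ) ≤ b * σ ^ 2)]
  exact le_of_sq_le_sq (le_of_mul_le_mul_left hsq (by positivity)) (by positivity)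

lemma sum_sq_le_card_mul_sq_of_le_add {ι : Type*} {s : Finset ι} {u D : ι → ℝ} {c β σ : ℝ}
    (hc : 0 ≤ c) (hβ : 0 ≤ β) (hσ : 0 ≤ σ) (hu0 : ∀ k ∈ s, 0 ≤ u k)
    (hu : ∀ k ∈ s, u k ≤ c + β * D k) (hD : ∑ k ∈ s, D k ^ 2 ≤ #s * σ ^ 2) :
    ∑ k ∈ s, u k ^ 2 ≤ #s * (c + β * σ) ^ 2 := by
  have hsumD : ∑ k ∈ s, D k ≤ #s * σ := by
    refine le_of_sq_le_sq ((sq_sum_le_card_mul_sum_sq ..).trans ?_) (by positivity)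
    nlinarith [mul_le_mul_of_nonneg_left hD (Nat.cast_nonneg (α := ℝ) #s)]
  calc ∑ k ∈ s, u k ^ 2 ≤ ∑ k ∈ s, (c + β * D k) ^ 2 :=
        sum_le_sum fun k hk => pow_le_pow_left₀ (hu0 k hk) (hu k hk) 2
    _ = #s * c ^ 2 + 2 * c * β * ∑ k ∈ s, D k + β ^ 2 * ∑ k ∈ s, D k ^ 2 := by
        simp only [add_sq, mul_pow, sum_add_distrib, sum_const, nsmul_eq_mul, ← mul_sum]; ring
    _ ≤ #s * (c + β * σ) ^ 2 := by
        nlinarith [mul_le_mul_of_nonneg_left hsumD (by positivity : 0 ≤ 2 * c * β),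
          mul_le_mul_of_nonneg_left hD (sq_nonneg β)]

lemma add_sq_le_of_sq_le_div {κ m s t V : ℝ} (hκ : 0 ≤ κ) (hm : 0 < m) (hs : 0 ≤ s)
    (hV : 0 ≤ V) (h : s ^ 2 ≤ κ / m * V) :
    (s + t) ^ 2 ≤ (κ + 1) / m * (V + m * t ^ 2) := by
  rw [div_mul_eq_mul_div, le_div_iff₀ hm]
  rw [div_mul_eq_mul_div, le_div_iff₀ hm] at h
  rcases hκ.eq_or_lt with rfl | hκ
  · have hs0 : s ^ 2 * m = 0 := le_antisymm (by simpa using h) (by positivity)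
    obtain rfl : s = 0 := by simpa [hm.ne'] using hs0
    nlinarith
  · nlinarith [mul_nonneg hm.le (sq_nonneg (s - κ * t))]

section NormedAddCommGroup
variable {ι E : Type*} [NormedAddCommGroup E]

lemma sq_norm_sum_le_card_mul (s : Finset ι) (v : ι → E) :
    ‖∑ i ∈ s, v i‖ ^ 2 ≤ #s * ∑ i ∈ s, ‖v i‖ ^ 2 :=
  (pow_le_pow_left₀ (norm_nonneg _) (norm_sum_le s v) 2).trans (sq_sum_le_card_mul_sum_sq ..)

variable [DecidableEq ι]

lemma card_mul_sq_norm_sum_inter_le {s : Finset ι} (t : Finset ι) {v : ι → E}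
    (hv : ∑ i ∈ s, v i = 0) :
    #s * ‖∑ i ∈ s ∩ t, v i‖ ^ 2 ≤ #(s ∩ t) * #(s \ t) * ∑ i ∈ s, ‖v i‖ ^ 2 := by
  have hdiff : ∑ i ∈ s \ t, v i = -∑ i ∈ s ∩ t, v i := by
    rw [eq_neg_iff_add_eq_zero, add_comm, sum_inter_add_sum_sdiff, hv]
  have hinter := sq_norm_sum_le_card_mul (s ∩ t) v
  have hsdiff := sq_norm_sum_le_card_mul (s \ t) v
  rw [hdiff, norm_neg] at hsdiff
  rw [← card_inter_add_card_sdiff s t, ← sum_inter_add_sum_sdiff s t]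
  push_cast
  nlinarith [mul_le_mul_of_nonneg_left hinter (Nat.cast_nonneg (α := ℝ) #(s \ t)),
    mul_le_mul_of_nonneg_left hsdiff (Nat.cast_nonneg (α := ℝ) #(s ∩ t))]

lemma norm_sum_le_of_forall_norm_sub_le {v : ι → E} {N : Finset ι} (S : Finset ι) {j k : ι}
    (hnear : ∀ i ∈ N, ‖v i - v k‖ ≤ ‖v j - v k‖) :
    ‖∑ i ∈ N, v i‖ ≤ ‖∑ i ∈ S ∩ N, v i‖ + #(N \ S) * (‖v j‖ + 2 * ‖v k‖) := by
  have hfar : ∀ i ∈ N \ S, ‖v i‖ ≤ ‖v j‖ + 2 * ‖v k‖ := fun i hi => by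
    have := hnear i (mem_sdiff.1 hi).1
    linarith [norm_le_norm_sub_add (v i) (v k), norm_sub_le (v j) (v k)]
  rw [← sum_inter_add_sum_sdiff N S, inter_comm]
  refine (norm_add_le _ _).trans (add_le_add_right ?_ _)
  simpa only [sum_const, nsmul_eq_mul] using norm_sum_le_of_le _ hfar

variable [Fintype ι]

lemma norm_sum_nearest_le {v : ι → E} {S N : Finset ι} {k : ι} {f fhat : ℕ} {σ Λ : ℝ}
    (hv : ∑ i ∈ S, v i = 0) (hS : #S = Fintype.card ι - f) (hN : #N = Fintype.card ι - fhat)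
    (hf : f ≤ fhat) (hfn : 2 * fhat < Fintype.card ι)
    (hnear : ∀ i ∈ N, ∀ j ∉ N, ‖v i - v k‖ ≤ ‖v j - v k‖)
    (hσ0 : 0 ≤ σ) (hσ : ∑ i ∈ S, ‖v i‖ ^ 2 ≤ #S * σ ^ 2)
    (hΛf : 2 * f ≤ Λ) (hΛ : 12 * fhat * #N ^ 2 ≤ #S * Λ ^ 2) :
    ‖∑ i ∈ N, v i‖ ≤ (Λ - 2 * f) * σ + 2 * f * ‖v k‖ := by
  have hSN : #(S ∩ N) + #(S \ N) = #S := card_inter_add_card_sdiff S N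
  have hNS : #(S ∩ N) + #(N \ S) = #N := by
    rw [inter_comm]; exact card_inter_add_card_sdiff N S
  have haf : #(N \ S) ≤ f := by
    have := card_le_card (fun i hi => mem_compl.2 (mem_sdiff.1 hi).2 : N \ S ⊆ Sᶜ)
    rw [card_compl] at this
    omega
  have hfar : 0 ≤ 2 * f * ‖v k‖ - #(N \ S) * (2 * ‖v k‖) := by
    have : (#(N \ S) : ℝ) ≤ f := by exact_mod_cast haf
    nlinarith [norm_nonneg (v k)]
  rcases (S \ N).eq_empty_or_nonempty with hB | hB
  · obtain rfl : S = N := eq_of_subset_of_card_le (sdiff_eq_empty_iff_subset.1 hB) (by omega)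
    rw [hv, norm_zero]
    nlinarith [norm_nonneg (v k)]
  obtain ⟨j, hjB, hjmin⟩ := (S \ N).exists_min_image (fun i => ‖v i‖) hB
  have hm : (#S : ℝ) = #(S ∩ N) + #(S \ N) := by exact_mod_cast hSN.symm
  have hτ : #(S \ N) * ‖v j‖ ^ 2 ≤ (#(S ∩ N) + #(S \ N)) * σ ^ 2 := calc
    #(S \ N) * ‖v j‖ ^ 2 ≤ ∑ i ∈ S \ N, ‖v i‖ ^ 2 := by
      simpa only [nsmul_eq_mul] using
        card_nsmul_le_sum _ _ _ fun i hi => pow_le_pow_left₀ (norm_nonneg _) (hjmin i hi) 2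
    _ ≤ ∑ i ∈ S, ‖v i‖ ^ 2 :=
      sum_le_sum_of_subset_of_nonneg sdiff_subset fun _ _ _ => by positivity
    _ ≤ _ := hm ▸ hσ
  have hW : ‖∑ i ∈ S ∩ N, v i‖ ^ 2 ≤ #(S \ N) * #(S ∩ N) * σ ^ 2 := by
    have := card_mul_sq_norm_sum_inter_le N hv
    refine le_of_mul_le_mul_left (a := (#S : ℝ)) ?_ (by exact_mod_cast (show 0 < #S by omega))
    nlinarith [mul_le_mul_of_nonneg_left hσ (by positivity : (0 : ℝ) ≤ #(S ∩ N) * #(S \ N))]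
  have hΛ0 : 0 ≤ Λ := by linarith [(Nat.cast_nonneg f : (0 : ℝ) ≤ f)]
  have hkey := add_add_le_mul_of_sq_le haf hf (by omega) (by omega) (card_pos.2 hB) hσ0 hΛ0
    hW hτ (by rw [← hSN, ← hNS] at hΛ; exact_mod_cast hΛ)
  have hgeom := norm_sum_le_of_forall_norm_sub_le S fun i hi => hnear i hi j (mem_sdiff.1 hjB).2
  linarith

lemma sum_sq_norm_sum_nearest_le {v : ι → E} {S : Finset ι} {N : ι → Finset ι} {f fhat : ℕ}
    (hv : ∑ i ∈ S, v i = 0) (hS : #S = Fintype.card ι - f)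
    (hN : ∀ k, #(N k) = Fintype.card ι - fhat) (hf : f ≤ fhat) (hfn : 2 * fhat < Fintype.card ι)
    (hnear : ∀ k, ∀ i ∈ N k, ∀ j ∉ N k, ‖v i - v k‖ ≤ ‖v j - v k‖) :
    ∑ k ∈ S, ‖∑ i ∈ N k, v i‖ ^ 2 ≤
      12 * fhat * ((Fintype.card ι - fhat : ℕ) : ℝ) ^ 2 * ((#S : ℝ)⁻¹ * ∑ i ∈ S, ‖v i‖ ^ 2) := by
  have hm : (0 : ℝ) < #S := by exact_mod_cast (show 0 < #S by omega)
  obtain ⟨σ, hσ0, hσ⟩ : ∃ σ : ℝ, 0 ≤ σ ∧ σ ^ 2 = (#S : ℝ)⁻¹ * ∑ i ∈ S, ‖v i‖ ^ 2 :=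
    ⟨_, Real.sqrt_nonneg _, Real.sq_sqrt (by positivity)⟩
  have hσS : ∑ i ∈ S, ‖v i‖ ^ 2 = #S * σ ^ 2 := by rw [hσ]; field_simp
  obtain ⟨Λ, hΛ0, hΛ⟩ : ∃ Λ : ℝ, 0 ≤ Λ ∧
      #S * Λ ^ 2 = 12 * fhat * ((Fintype.card ι - fhat : ℕ) : ℝ) ^ 2 :=
    ⟨√(12 * fhat * ((Fintype.card ι - fhat : ℕ) : ℝ) ^ 2 / #S), Real.sqrt_nonneg _,
      by rw [Real.sq_sqrt (div_nonneg (by positivity) hm.le), mul_div_cancel₀ _ hm.ne']⟩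
  have hΛf : 2 * f ≤ Λ := by
    refine le_of_sq_le_sq (le_of_mul_le_mul_left ?_ hm) hΛ0
    have hcount : (4 * f ^ 2 * #S : ℝ) ≤ 12 * fhat * ((Fintype.card ι - fhat : ℕ) : ℝ) ^ 2 := by
      rw [hS]; exact_mod_cast four_mul_sq_mul_le hf hfn.le
    linarith
  calc ∑ k ∈ S, ‖∑ i ∈ N k, v i‖ ^ 2 ≤ #S * ((Λ - 2 * f) * σ + 2 * f * σ) ^ 2 :=
        sum_sq_le_card_mul_sq_of_le_add (mul_nonneg (sub_nonneg.2 hΛf) hσ0) (by positivity) hσ0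
          (fun _ _ => norm_nonneg _)
          (fun k _ => norm_sum_nearest_le hv hS (hN k) hf hfn (hnear k) hσ0 hσS.le hΛf
            (by rw [hN k, hΛ]))
          hσS.le
    _ = 12 * fhat * ((Fintype.card ι - fhat : ℕ) : ℝ) ^ 2 * σ ^ 2 := by rw [← hΛ]; ring
    _ = _ := by rw [hσ]

end NormedAddCommGroup

lemma sum_sub_smul_sum_eq_zero {ι E : Type*} [AddCommGroup E] [Module ℝ E] (s : Finset ι)
    (x : ι → E) : ∑ i ∈ s, (x i - (#s : ℝ)⁻¹ • ∑ j ∈ s, x j) = 0 := by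
  rcases s.eq_empty_or_nonempty with rfl | hs
  · simp
  rw [sum_sub_distrib, sum_const, ← Nat.cast_smul_eq_nsmul ℝ,
    smul_inv_smul₀ (by simp [hs.ne_empty]), sub_self]

lemma sum_norm_sub_sq_eq {ι E : Type*} [NormedAddCommGroup E] [InnerProductSpace ℝ E]
    (s : Finset ι) (y : ι → E) (c : E) :
    ∑ i ∈ s, ‖y i - c‖ ^ 2 = ∑ i ∈ s, ‖y i - (#s : ℝ)⁻¹ • ∑ j ∈ s, y j‖ ^ 2
      + #s * ‖(#s : ℝ)⁻¹ • ∑ j ∈ s, y j - c‖ ^ 2 := by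
  set ybar := (#s : ℝ)⁻¹ • ∑ j ∈ s, y j
  have hsplit : ∀ i ∈ s, ‖y i - c‖ ^ 2
      = ‖y i - ybar‖ ^ 2 + 2 * inner ℝ (y i - ybar) (ybar - c) + ‖ybar - c‖ ^ 2 := fun i _ => by
    rw [← norm_add_sq_real, sub_add_sub_cancel]
  rw [sum_congr rfl hsplit, sum_add_distrib, sum_add_distrib, ← mul_sum, ← sum_inner,
    sum_sub_smul_sum_eq_zero, inner_zero_left, mul_zero, add_zero, sum_const, nsmul_eq_mul]

lemma sum_sq_norm_nnm_sub_le {ι E : Type*} [Fintype ι] [DecidableEq ι] [NormedAddCommGroup E]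
    [NormedSpace ℝ E] {x y : ι → E} {S : Finset ι} {N : ι → Finset ι} {f fhat : ℕ}
    (hS : #S = Fintype.card ι - f) (hN : ∀ k, #(N k) = Fintype.card ι - fhat) (hf : f ≤ fhat)
    (hfn : 2 * fhat < Fintype.card ι)
    (hnear : ∀ k, ∀ i ∈ N k, ∀ j ∉ N k, ‖x i - x k‖ ≤ ‖x j - x k‖)
    (hy : ∀ k, y k = ((Fintype.card ι : ℝ) - fhat)⁻¹ • ∑ i ∈ N k, x i) :
    ∑ k ∈ S, ‖y k - (#S : ℝ)⁻¹ • ∑ i ∈ S, x i‖ ^ 2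
      ≤ 12 * fhat * ((#S : ℝ)⁻¹ * ∑ i ∈ S, ‖x i - (#S : ℝ)⁻¹ • ∑ j ∈ S, x j‖ ^ 2) := by
  set xbar := (#S : ℝ)⁻¹ • ∑ i ∈ S, x i
  have hp : ((Fintype.card ι : ℝ) - fhat) = ((Fintype.card ι - fhat : ℕ) : ℝ) := by
    rw [Nat.cast_sub (by omega)]
  have hp0 : ((Fintype.card ι - fhat : ℕ) : ℝ) ≠ 0 := by
    exact_mod_cast (show Fintype.card ι - fhat ≠ 0 by omega)
  have hyv : ∀ k, y k - xbar = ((Fintype.card ι - fhat : ℕ) : ℝ)⁻¹ • ∑ i ∈ N k, (x i - xbar) :=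
    fun k => by
      rw [hy k, hp, sum_sub_distrib, sum_const, hN k, ← Nat.cast_smul_eq_nsmul ℝ, smul_sub,
        inv_smul_smul₀ hp0]
  have hcentered := sum_sq_norm_sum_nearest_le (sum_sub_smul_sum_eq_zero S x) hS hN hf hfn
    (fun k i hi j hj => by simpa only [sub_sub_sub_cancel_right] using hnear k i hi j hj)
  simp only [hyv, norm_smul, mul_pow, ← mul_sum, norm_inv, Real.norm_natCast, inv_pow]
  rw [inv_mul_le_iff₀ (by positivity)]
  exact hcentered.trans_eq (by ring)

lemma IsRobust.sq_norm_sub_le {n d f : ℕ} {κ : ℝ}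
    {A : (Fin n → EuclideanSpace ℝ (Fin d)) → EuclideanSpace ℝ (Fin d)}
    (hA : IsRobust n d f κ A) (hκ : 0 ≤ κ) (y : Fin n → EuclideanSpace ℝ (Fin d))
    {S : Finset (Fin n)} (hS : #S = n - f) (hm : 0 < #S) (c : EuclideanSpace ℝ (Fin d)) :
    ‖A y - c‖ ^ 2 ≤ (κ + 1) / #S * ∑ i ∈ S, ‖y i - c‖ ^ 2 := by
  set ybar := (#S : ℝ)⁻¹ • ∑ i ∈ S, y i
  calc ‖A y - c‖ ^ 2 ≤ (‖A y - ybar‖ + ‖ybar - c‖) ^ 2 :=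
        pow_le_pow_left₀ (norm_nonneg _) (norm_sub_le_norm_sub_add_norm_sub ..) 2
    _ ≤ (κ + 1) / #S * (∑ i ∈ S, ‖y i - ybar‖ ^ 2 + #S * ‖ybar - c‖ ^ 2) :=
        add_sq_le_of_sq_le_div hκ (by exact_mod_cast hm) (norm_nonneg _) (by positivity)
          (hA y S hS)
    _ = (κ + 1) / #S * ∑ i ∈ S, ‖y i - c‖ ^ 2 := by rw [sum_norm_sub_sq_eq S y c]

theorem stmt_4_general (n d f fhat : ℕ)
    (hf : f ≤ fhat) (hfn : 2 * fhat < n) (κ : ℝ) (hκ : 0 ≤ κ)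
    (A : (Fin n → EuclideanSpace ℝ (Fin d)) → EuclideanSpace ℝ (Fin d))
    (hA : IsRobust n d f κ A)
    (x : Fin n → EuclideanSpace ℝ (Fin d))
    (N : Fin n → Finset (Fin n)) (hN : ∀ k, IsNN n d fhat x k (N k))
    (y : Fin n → EuclideanSpace ℝ (Fin d))
    (hy : ∀ k, y k = ((n : ℝ) - fhat)⁻¹ • ∑ i ∈ N k, x i)
    (S : Finset (Fin n)) (hS : S.card = n - f) :
    ‖A y - (S.card : ℝ)⁻¹ • ∑ i ∈ S, x i‖ ^ 2
      ≤ (12 * (fhat : ℝ) * (κ + 1) / ((n : ℝ) - f)) *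
          ((S.card : ℝ)⁻¹ * ∑ i ∈ S, ‖x i - (S.card : ℝ)⁻¹ • ∑ j ∈ S, x j‖ ^ 2) := by
  have hnnm := sum_sq_norm_nnm_sub_le (x := x) (y := y) (S := S) (by simpa using hS)
    (fun k => by simpa using (hN k).1) hf (by simpa using hfn) (fun k => (hN k).2)
    (by simpa using hy)
  calc _ ≤ (κ + 1) / #S * ∑ k ∈ S, ‖y k - (#S : ℝ)⁻¹ • ∑ i ∈ S, x i‖ ^ 2 :=
        hA.sq_norm_sub_le hκ y hS (by omega) _
    _ ≤ (κ + 1) / #S * (12 * fhat * _) := mul_le_mul_of_nonneg_left hnnm (by positivity)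
    _ = _ := by rw [hS, Nat.cast_sub (by omega)]; ring

/-- NNM boosting: if `A` is `(f,κ)`-robust and `0 ≤ f ≤ f̂ < n/2`, then `A ∘ (f̂-NNM)` is
`(f,κ')`-robust with `κ' = 12 f̂ (κ+1) / (n - f)`. -/
theorem stmt_4 (n d f fhat : ℕ) (hn : 1 ≤ n) (hd : 1 ≤ d)
    (hf : f ≤ fhat) (hfn : 2 * fhat < n) (κ : ℝ) (hκ : 0 ≤ κ)
    (A : (Fin n → EuclideanSpace ℝ (Fin d)) → EuclideanSpace ℝ (Fin d))
    (hA : IsRobust n d f κ A)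
    (x : Fin n → EuclideanSpace ℝ (Fin d))
    (N : Fin n → Finset (Fin n)) (hN : ∀ k, IsNN n d fhat x k (N k))
    (y : Fin n → EuclideanSpace ℝ (Fin d))
    (hy : ∀ k, y k = ((n : ℝ) - fhat)⁻¹ • ∑ i ∈ N k, x i)
    (S : Finset (Fin n)) (hS : S.card = n - f) :
    ‖A y - (S.card : ℝ)⁻¹ • ∑ i ∈ S, x i‖ ^ 2
      ≤ (12 * (fhat : ℝ) * (κ + 1) / ((n : ℝ) - f)) *
          ((S.card : ℝ)⁻¹ * ∑ i ∈ S, ‖x i - (S.card : ℝ)⁻¹ • ∑ j ∈ S, x j‖ ^ 2) :=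
  stmt_4_general n d f fhat hf hfn κ hκ A hA x N hN y hy S hS
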